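/- arXiv:2503.22928 — 2 statements merged into one kernel-verified Lean document; each statement's English description precedes it below -/
import Mathlib

section
/- Let x_n → x uniformly on compact subsets of [0,∞), where each x_n and x are continuous, and suppose x(t₀) > I_max for some t₀ ≥ 0. If κ_n → ∞ and δ > 0, then ∫₀^∞ κ_n·(max{0, x_n(t) - I_max})²·e^{-δt} dt → ∞. -/
/-!
Since the limit exceeds some `b > I_max` near `t₀`, locally uniform convergence gives one interval
`[t₀, u)` on which `x_n > b` for all large `n`. There the integrand is at least
`κ_n (b - I_max)² e^{-δ u}`, so the integral is at least `κ_n (b - I_max)² e^{-δ u} (u - t₀) → ∞`.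
-/

open MeasureTheory Filter Topology Set

theorem TendstoLocallyUniformlyOn.exists_mem_nhdsWithin_eventually_forall_lt
    {ι X : Type*} [TopologicalSpace X] {F : ι → X → ℝ} {f : X → ℝ} {p : Filter ι} {s : Set X}
    {x₀ : X} {b : ℝ} (hF : TendstoLocallyUniformlyOn F f p s) (hf : ContinuousWithinAt f s x₀)
    (hx₀ : x₀ ∈ s) (hb : b < f x₀) :
    ∃ t ∈ 𝓝[s] x₀, ∀ᶠ n in p, ∀ y ∈ t, b < F n y := by
  obtain ⟨c, hbc, hc⟩ := exists_between hb
  obtain ⟨t, ht, hFt⟩ :=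
    Metric.tendstoLocallyUniformlyOn_iff.mp hF (c - b) (sub_pos.mpr hbc) x₀ hx₀
  refine ⟨t ∩ {y | c < f y}, inter_mem ht (hf.eventually_const_lt hc), ?_⟩
  filter_upwards [hFt] with n hn y ⟨hyt, hy⟩
  have : f y - F n y < c - b := (abs_sub_lt_iff.mp (hn y hyt)).1
  linarith [show c < f y from hy]

theorem tendsto_setLIntegral_nhds_top_of_eventually_le {ι α : Type*} [MeasurableSpace α]
    {μ : Measure α} {p : Filter ι} {G : ι → α → ENNReal} {c : ι → ENNReal} {A s : Set α}
    (hA : MeasurableSet A) (hAs : A ⊆ s) (hμA : μ A ≠ 0) (hc : Tendsto c p (𝓝 ⊤))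
    (hG : ∀ᶠ n in p, ∀ t ∈ A, c n ≤ G n t) :
    Tendsto (fun n => ∫⁻ t in s, G n t ∂μ) p (𝓝 ⊤) := by
  have hcμ : Tendsto (fun n => c n * μ A) p (𝓝 ⊤) := by
    simpa [ENNReal.top_mul hμA] using
      ENNReal.Tendsto.mul_const (b := μ A) hc (Or.inl ENNReal.top_ne_zero)
  refine tendsto_nhds_top_mono hcμ ?_
  filter_upwards [hG] with n hn
  calc c n * μ A = ∫⁻ _ in A, c n ∂μ := (setLIntegral_const A (c n)).symm
    _ ≤ ∫⁻ t in A, G n t ∂μ := setLIntegral_mono' hA hn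
    _ ≤ ∫⁻ t in s, G n t ∂μ := lintegral_mono_set hAs

theorem stmt15_general
    (Imax δ t₀ : ℝ) (hδ : 0 < δ) (ht₀ : 0 ≤ t₀)
    (x : ℕ → ℝ → ℝ) (xl : ℝ → ℝ)
    (hxlc : Continuous xl)
    (hconv : TendstoLocallyUniformlyOn x xl atTop (Set.Ici (0:ℝ)))
    (hviol : xl t₀ > Imax)
    (κ : ℕ → ℝ) (hκ : Tendsto κ atTop atTop) :
    Tendsto (fun n => ∫⁻ t in Set.Ici (0:ℝ),
        ENNReal.ofReal (κ n * (max 0 (x n t - Imax))^2 * Real.exp (-δ * t)))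
      atTop (nhds ⊤) := by
  obtain ⟨b, hImax, hb⟩ := exists_between hviol
  obtain ⟨v, hv, hxv⟩ := hconv.exists_mem_nhdsWithin_eventually_forall_lt
    hxlc.continuousWithinAt ht₀ hb
  obtain ⟨u, htu, hIco⟩ := mem_nhdsGE_iff_exists_Ico_subset.mp
    (nhdsWithin_mono t₀ (Ici_subset_Ici.mpr ht₀) hv)
  have hC : 0 < (b - Imax) ^ 2 * Real.exp (-δ * u) := by
    have := sub_pos.mpr hImax
    positivity
  refine tendsto_setLIntegral_nhds_top_of_eventually_le measurableSet_Ico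
    (fun t ht => ht₀.trans ht.1) (by simpa using htu)
    (ENNReal.tendsto_ofReal_atTop.comp (hκ.atTop_mul_const hC)) ?_
  filter_upwards [hκ.eventually_ge_atTop 0, hxv] with n hκn hxn t ht
  have hxnt := hxn t (hIco ht)
  refine ENNReal.ofReal_le_ofReal ?_
  show κ n * ((b - Imax) ^ 2 * Real.exp (-δ * u)) ≤ _
  rw [← mul_assoc]
  gcongr ?_ * ?_ * Real.exp ?_
  · exact pow_le_pow_left₀ (sub_nonneg.mpr hImax.le) (le_max_of_le_right (by linarith)) 2
  · nlinarith [ht.2]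

theorem stmt15
    (Imax δ t₀ : ℝ) (hδ : 0 < δ) (ht₀ : 0 ≤ t₀)
    (x : ℕ → ℝ → ℝ) (xl : ℝ → ℝ)
    (hxc : ∀ n, Continuous (x n)) (hxlc : Continuous xl)
    (hconv : TendstoLocallyUniformlyOn x xl atTop (Set.Ici (0:ℝ)))
    (hviol : xl t₀ > Imax)
    (κ : ℕ → ℝ) (hκpos : ∀ n, 0 < κ n) (hκ : Tendsto κ atTop atTop) :
    Tendsto (fun n => ∫⁻ t in Set.Ici (0:ℝ),
        ENNReal.ofReal (κ n * (max 0 (x n t - Imax))^2 * Real.exp (-δ * t)))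
      atTop (nhds ⊤) :=
  stmt15_general Imax δ t₀ hδ ht₀ x xl hxlc hconv hviol κ hκ
end

section
/- On a boundary-maintenance arc where i(t) ≡ I_max on an interval J, the SEIR dynamics force σ·e(t) = γ·I_max for all t in J. If additionally e'(t) = 0 on J, then the suppression control must satisfy h(t) = β - γ/s(t), equivalently the effective reproduction number ((β - h(t))/γ)·s(t) = 1. -/
/-! On the arc `i ≡ I_max`, so `i' = 0` and the `i`-equation reads `σ e = γ I_max`. If moreover
`e' = 0`, the `e`-equation becomes `((β - h) s - γ) I_max = 0`, and `I_max ≠ 0` gives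
`(β - h) s = γ`, which is both claimed identities. -/

open Set Filter

theorem HasDerivAt.eq_zero_of_eqOn_const {𝕜 F : Type*} [NontriviallyNormedField 𝕜]
    [NormedAddCommGroup F] [NormedSpace 𝕜 F] {f : 𝕜 → F} {f' c : F} {U : Set 𝕜} {t : 𝕜}
    (hU : IsOpen U) (hfU : EqOn f (fun _ => c) U) (ht : t ∈ U) (hf : HasDerivAt f f' t) :
    f' = 0 :=
  hf.unique <| (hasDerivAt_const t c).congr_of_eventuallyEq <|
    eventuallyEq_of_mem (hU.mem_nhds ht) hfU

theorem sub_mul_eq_iff_sub_eq_div {K : Type*} [Field K] {β h s γ : K} (hs : s ≠ 0) :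
    (β - h) * s = γ ↔ h = β - γ / s := by
  rw [eq_sub_iff_add_eq, ← eq_sub_iff_add_eq', div_eq_iff hs, eq_comm]

theorem div_mul_eq_one_of_mul_eq {K : Type*} [Field K] {x s γ : K} (hγ : γ ≠ 0)
    (hx : x * s = γ) : x / γ * s = 1 := by
  rw [div_mul_eq_mul_div, hx, div_self hγ]

theorem stmt17_general
    (β σ γ Imax a b : ℝ) (hγ : 0 < γ) (hImax : 0 < Imax)
    (h s e i : ℝ → ℝ)
    (hspos : ∀ t ∈ Set.Ioo a b, 0 < s t)
    (hiconst : ∀ t ∈ Set.Ioo a b, i t = Imax)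
    (hid : ∀ t ∈ Set.Ioo a b, HasDerivAt i (σ * e t - γ * i t) t) :
    (∀ t ∈ Set.Ioo a b, σ * e t = γ * Imax) ∧
    ((∀ t ∈ Set.Ioo a b, (β - h t) * s t * i t - σ * e t = 0) →
      ∀ t ∈ Set.Ioo a b, h t = β - γ / s t ∧ ((β - h t) / γ) * s t = 1) := by
  have hbalance : ∀ t ∈ Ioo a b, σ * e t = γ * Imax := fun t ht => by
    have hi' := (hid t ht).eq_zero_of_eqOn_const isOpen_Ioo hiconst ht
    rwa [hiconst t ht, sub_eq_zero] at hi'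
  refine ⟨hbalance, fun hflat t ht => ?_⟩
  have hR : (β - h t) * s t = γ := by
    have hzero := hflat t ht
    rw [hiconst t ht, hbalance t ht, ← sub_mul, mul_eq_zero, sub_eq_zero] at hzero
    exact hzero.resolve_right hImax.ne'
  exact ⟨(sub_mul_eq_iff_sub_eq_div (hspos t ht).ne').mp hR, div_mul_eq_one_of_mul_eq hγ.ne' hR⟩

theorem stmt17
    (β σ γ Imax a b : ℝ) (hσ : 0 < σ) (hγ : 0 < γ) (hImax : 0 < Imax)
    (hab : a < b)
    (h s e i : ℝ → ℝ)
    (hspos : ∀ t ∈ Set.Ioo a b, 0 < s t)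
    (hiconst : ∀ t ∈ Set.Ioo a b, i t = Imax)
    (hid : ∀ t ∈ Set.Ioo a b, HasDerivAt i (σ * e t - γ * i t) t)
    (hed : ∀ t ∈ Set.Ioo a b, HasDerivAt e ((β - h t) * s t * i t - σ * e t) t) :
    (∀ t ∈ Set.Ioo a b, σ * e t = γ * Imax) ∧
    ((∀ t ∈ Set.Ioo a b, (β - h t) * s t * i t - σ * e t = 0) →
      ∀ t ∈ Set.Ioo a b, h t = β - γ / s t ∧ ((β - h t) / γ) * s t = 1) :=
  stmt17_general β σ γ Imax a b hγ hImax h s e i hspos hiconst hid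
end
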